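/- Let k be a commutative ring, (L,∘) a pre-Lie algebra over k, and ∘ its extension to S(L). Then for all A, B ∈ S(L) and all X ∈ L: A∘(B·X) = (A∘B)∘X − A∘(B∘X). -/
import Mathlib

open TensorProduct

section PLAux
variable {k S : Type*} [CommRing k] [CommRing S] [Algebra k S]

lemma plaux_lift_mul (f g : S →ₗ[k] S) :
    TensorProduct.lift ((LinearMap.mul k S).compl₁₂ f g)
      = (LinearMap.mul' k S).comp (TensorProduct.map f g) := by
  apply TensorProduct.ext'
  intro a b
  simp [LinearMap.compl₁₂_apply]

lemma plaux_map_deriv_left (D : S →ₗ[k] S) (hD : ∀ a b : S, D (a * b) = D a * b + a * D b)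
    (P Q : S ⊗[k] S) :
    TensorProduct.map D LinearMap.id (P * Q)
      = TensorProduct.map D LinearMap.id P * Q + P * TensorProduct.map D LinearMap.id Q := by
  induction P using TensorProduct.induction_on with
  | zero => simp
  | add u v hu hv =>
      rw [add_mul, map_add, hu, hv, map_add, add_mul]
      ring
  | tmul a b =>
      induction Q using TensorProduct.induction_on with
      | zero => simp
      | add u v hu hv =>
          rw [mul_add, map_add, hu, hv, map_add, mul_add]
          ring
      | tmul c d =>
          simp only [Algebra.TensorProduct.tmul_mul_tmul, map_tmul, LinearMap.id_coe, id_eq,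
            hD, add_tmul]

lemma plaux_map_deriv_right (D : S →ₗ[k] S) (hD : ∀ a b : S, D (a * b) = D a * b + a * D b)
    (P Q : S ⊗[k] S) :
    TensorProduct.map LinearMap.id D (P * Q)
      = TensorProduct.map LinearMap.id D P * Q + P * TensorProduct.map LinearMap.id D Q := by
  induction P using TensorProduct.induction_on with
  | zero => simp
  | add u v hu hv =>
      rw [add_mul, map_add, hu, hv, map_add, add_mul]
      ring
  | tmul a b =>
      induction Q using TensorProduct.induction_on with
      | zero => simp
      | add u v hu hv =>
          rw [mul_add, map_add, hu, hv, map_add, mul_add]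
          ring
      | tmul c d =>
          simp only [Algebra.TensorProduct.tmul_mul_tmul, map_tmul, LinearMap.id_coe, id_eq,
            hD, tmul_add]

/-- Submodule of `S ⊗ S` spanned by tensors `a ⊗ b` with `a, b ∈ p`. -/
def plauxSpanT (p : Submodule k S) : Submodule k (S ⊗[k] S) :=
  Submodule.span k (Set.image2 (· ⊗ₜ[k] ·) (p : Set S) (p : Set S))

lemma plauxSpanT_tmul_mem {p : Submodule k S} {a b : S} (ha : a ∈ p) (hb : b ∈ p) :
    a ⊗ₜ[k] b ∈ plauxSpanT p :=
  Submodule.subset_span (Set.mem_image2_of_mem ha hb)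

lemma plauxSpanT_mono {p q : Submodule k S} (h : p ≤ q) : plauxSpanT p ≤ plauxSpanT q :=
  Submodule.span_mono (Set.image2_subset h h)

lemma plauxSpanT_mul_tmul {p q : Submodule k S} {T : S ⊗[k] S} (hT : T ∈ plauxSpanT p)
    {c d : S} (hc : c ∈ q) (hd : d ∈ q) : T * (c ⊗ₜ[k] d) ∈ plauxSpanT (p * q) := by
  induction hT using Submodule.span_induction with
  | mem T' hT' =>
      obtain ⟨u, hu, v, hv, rfl⟩ := hT'
      rw [Algebra.TensorProduct.tmul_mul_tmul]
      exact plauxSpanT_tmul_mem (Submodule.mul_mem_mul hu hc) (Submodule.mul_mem_mul hv hd)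
  | zero => simpa using zero_mem _
  | add u v hu hv hpu hpv => rw [add_mul]; exact add_mem hpu hpv
  | smul r u hu hpu => rw [smul_mul_assoc]; exact Submodule.smul_mem _ _ hpu

end PLAux

set_option maxHeartbeats 2000000 in
/-- Let `k` be a commutative ring, `(L, ∘)` a pre-Lie algebra over `k`, `S` the
symmetric algebra of `L` (with shuffle coproduct `Δ` and counit `ε`), and `cS` the extension of
`∘` to `S`.  Then for all `A, B ∈ S` and `X ∈ L`: `A ∘ (B·X) = (A ∘ B) ∘ X - A ∘ (B ∘ X)`. -/
theorem preLie_extension_right_recursion.{u}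
    (k L S : Type u) [CommRing k] [AddCommGroup L] [Module k L]
    [CommRing S] [Algebra k S] (ι : L →ₗ[k] S)
    (hfree : ∀ (A : Type u) [CommRing A] [Algebra k A] (f : L →ₗ[k] A),
      ∃! g : S →ₐ[k] A, ∀ x : L, g (ι x) = f x)
    (Δ : S →ₐ[k] S ⊗[k] S) (hΔ : ∀ x : L, Δ (ι x) = ι x ⊗ₜ 1 + 1 ⊗ₜ ι x)
    (ε : S →ₐ[k] k) (hε : ∀ x : L, ε (ι x) = 0)
    (circ : L →ₗ[k] L →ₗ[k] L)
    (hpl : ∀ X Y Z : L,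
      circ X (circ Y Z) - circ (circ X Y) Z = circ X (circ Z Y) - circ (circ X Z) Y)
    (cS : S →ₗ[k] S →ₗ[k] S)
    (hrestrict : ∀ x y : L, cS (ι x) (ι y) = ι (circ x y))
    (hone : ∀ A : S, cS A 1 = A)
    (hrec : ∀ (t x : L) (B : S),
      cS (ι t) (B * ι x) = cS (cS (ι t) B) (ι x) - cS (ι t) (cS B (ι x)))
    (hmul : ∀ A B C : S, cS (A * B) C =
      TensorProduct.lift ((LinearMap.mul k S).compl₁₂ (cS A) (cS B)) (Δ C)) :
    ∀ (A B : S) (x : L), cS A (B * ι x) = cS (cS A B) (ι x) - cS A (cS B (ι x)) := by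
  classical
  have hmulM : ∀ A B C : S, cS (A * B) C
      = LinearMap.mul' k S (TensorProduct.map (cS A) (cS B) (Δ C)) := by
    intro A B C
    rw [hmul, plaux_lift_mul, LinearMap.comp_apply]
  -- `cS 1 (ι x) = 0`
  have h1x : ∀ x : L, cS 1 (ι x) = 0 := by
    intro x
    have h := hmulM 1 1 (ι x)
    rw [one_mul, hΔ] at h
    simp only [map_add, map_tmul, LinearMap.mul'_apply, hone, mul_one, one_mul] at h
    exact (left_eq_add.mp h)
  -- derivation property in the first argument
  have hder : ∀ (U V : S) (x : L), cS (U * V) (ι x) = cS U (ι x) * V + U * cS V (ι x) := by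
    intro U V x
    rw [hmulM, hΔ]
    simp [hone]
  -- generation of S by the image of ι
  have hgen : ∀ s : S, s ∈ Algebra.adjoin k (Set.range ι) := by
    intro s
    set R := Algebra.adjoin k (Set.range ι) with hR
    have hmem : ∀ x : L, ι x ∈ R := fun x => Algebra.subset_adjoin ⟨x, rfl⟩
    let f0 : L →ₗ[k] R :=
      { toFun := fun x => ⟨ι x, hmem x⟩
        map_add' := fun x y => by ext; simp
        map_smul' := fun r x => by ext; simp }
    obtain ⟨g, hg, -⟩ := hfree R f0
    obtain ⟨h, hh, hhu⟩ := hfree S ι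
    have e1 : R.val.comp g = h := by
      apply hhu
      intro x
      simp [hg x, f0]
    have e2 : AlgHom.id k S = h := by
      apply hhu
      intro x
      simp
    have e3 : R.val.comp g = AlgHom.id k S := e1.trans e2.symm
    have : R.val (g s) = s := by rw [← AlgHom.comp_apply, e3]; rfl
    rw [← this]
    exact (g s).2
  -- ε kills cS B (ι x)
  have hεD : ∀ (B : S) (x : L), ε (cS B (ι x)) = 0 := by
    intro B x
    induction hgen B using Algebra.adjoin_induction with
    | mem y hy =>
        obtain ⟨t, rfl⟩ := hy
        rw [hrestrict, hε]
    | algebraMap r =>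
        rw [Algebra.algebraMap_eq_smul_one, map_smul]
        simp [h1x x]
    | add u v hu hv hpu hpv =>
        rw [map_add, LinearMap.add_apply, map_add, hpu, hpv, add_zero]
    | mul u v hu hv hpu hpv =>
        rw [hder, map_add, map_mul, map_mul, hpu, hpv, zero_mul, mul_zero, add_zero]
  -- the filtration
  set J : Submodule k S := Submodule.span k (Set.range ι) with hJ
  set K : Submodule k S := 1 ⊔ J with hK
  have h1K : (1 : Submodule k S) ≤ K := le_sup_left
  have hJK : J ≤ K := le_sup_right
  have hKmono : ∀ n : ℕ, (K ^ n : Submodule k S) ≤ K ^ (n + 1) := by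
    intro n
    calc (K ^ n : Submodule k S) = K ^ n * 1 := (Submodule.mul_one _).symm
      _ ≤ K ^ n * K := mul_le_mul' le_rfl h1K
      _ = K ^ (n + 1) := (pow_succ K n).symm
  have hKle : ∀ {m n : ℕ}, m ≤ n → (K ^ m : Submodule k S) ≤ K ^ n := by
    intro m n h
    exact monotone_nat_of_le_succ hKmono h
  have h1Kn : ∀ n : ℕ, (1 : Submodule k S) ≤ K ^ n := by
    intro n
    have := hKle (Nat.zero_le n)
    rwa [pow_zero] at this
  have hmemK : ∀ x : L, ι x ∈ K := fun x => hJK (Submodule.subset_span ⟨x, rfl⟩)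
  have honeK : ∀ n : ℕ, (1 : S) ∈ (K ^ n : Submodule k S) :=
    fun n => Submodule.one_le.mp (h1Kn n)
  have hmemKn : ∀ (n : ℕ) (x : L), ι x ∈ (K ^ (n + 1) : Submodule k S) := by
    intro n x
    have : (K : Submodule k S) ≤ K ^ (n + 1) := by
      have := hKle (show 1 ≤ n + 1 by omega)
      rwa [pow_one] at this
    exact this (hmemK x)
  -- every element lies in some K ^ n
  have hF1 : ∀ C : S, ∃ n : ℕ, C ∈ (K ^ n : Submodule k S) := by
    intro C
    induction hgen C using Algebra.adjoin_induction with
    | mem y hy =>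
        exact ⟨1, by rw [pow_one]; exact hJK (Submodule.subset_span hy)⟩
    | algebraMap r =>
        exact ⟨0, by rw [pow_zero]; exact Submodule.algebraMap_mem r⟩
    | add u v hu hv hpu hpv =>
        obtain ⟨m, hm⟩ := hpu
        obtain ⟨n, hn⟩ := hpv
        exact ⟨max m n, add_mem (hKle (le_max_left m n) hm) (hKle (le_max_right m n) hn)⟩
    | mul u v hu hv hpu hpv =>
        obtain ⟨m, hm⟩ := hpu
        obtain ⟨n, hn⟩ := hpv
        exact ⟨m + n, by rw [pow_add]; exact Submodule.mul_mem_mul hm hn⟩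
  -- the reduced coproduct
  obtain ⟨Dbar, hDbar_apply⟩ : ∃ D : S →ₗ[k] S ⊗[k] S, ∀ C : S,
      D C = Δ C - C ⊗ₜ[k] 1 - 1 ⊗ₜ[k] C + ε C • ((1 : S) ⊗ₜ[k] (1 : S)) :=
    ⟨Δ.toLinearMap - (TensorProduct.mk k S S).flip 1 - TensorProduct.mk k S S 1
      + (ε.toLinearMap).smulRight ((1 : S) ⊗ₜ[k] (1 : S)), fun C => by simp⟩
  have hDbarK : ∀ C ∈ K, Dbar C = 0 := by
    have hker : K ≤ LinearMap.ker Dbar := by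
      rw [hK]
      refine sup_le ?_ ?_
      · intro y hy
        obtain ⟨r, rfl⟩ := Submodule.mem_one.mp hy
        rw [LinearMap.mem_ker, Algebra.algebraMap_eq_smul_one, map_smul, hDbar_apply]
        simp [Algebra.TensorProduct.one_def]
      · rw [hJ, Submodule.span_le]
        rintro y ⟨x, rfl⟩
        simp only [SetLike.mem_coe, LinearMap.mem_ker]
        rw [hDbar_apply, hΔ x, hε x, zero_smul, add_zero]
        abel
    intro C hC
    exact hker hC
  -- reduced coproduct decreases the filtration
  have hstep : ∀ n : ℕ, ∀ C ∈ (K ^ (n + 1) : Submodule k S), Dbar C ∈ plauxSpanT (K ^ n) := by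
    intro n
    induction n with
    | zero =>
        intro C hC
        rw [pow_one] at hC
        rw [hDbarK C hC]
        exact zero_mem _
    | succ n IH =>
        intro C hC
        rw [pow_succ] at hC
        refine Submodule.mul_induction_on hC (fun a ha b hb => ?_)
          (fun u v hu hv => by rw [map_add]; exact add_mem hu hv)
        obtain ⟨y, hy, z, hz, rfl⟩ := Submodule.mem_sup.mp hb
        rw [mul_add, map_add]
        refine add_mem ?_ ?_
        · obtain ⟨r, rfl⟩ := Submodule.mem_one.mp hy
          have e : a * algebraMap k S r = r • a := by
            rw [Algebra.smul_def, mul_comm]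
          rw [e, map_smul]
          exact Submodule.smul_mem _ _ (plauxSpanT_mono (hKmono n) (IH a ha))
        · have hmain : ∀ w ∈ J, Dbar (a * w) ∈ plauxSpanT (K ^ (n + 1)) := by
            intro w hw
            induction hw using Submodule.span_induction with
            | mem w hw' =>
                obtain ⟨x, rfl⟩ := hw'
                have key : Dbar (a * ι x)
                    = a ⊗ₜ[k] ι x + ι x ⊗ₜ[k] a - ε a • ((1 : S) ⊗ₜ[k] ι x)
                      - ε a • (ι x ⊗ₜ[k] (1 : S))
                      + Dbar a * (ι x ⊗ₜ[k] (1 : S)) + Dbar a * ((1 : S) ⊗ₜ[k] ι x) := by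
                  have e1 : Δ a = Dbar a + a ⊗ₜ[k] 1 + 1 ⊗ₜ[k] a
                      - ε a • ((1 : S) ⊗ₜ[k] (1 : S)) := by
                    rw [hDbar_apply]; abel
                  have e0 : ε (a * ι x) = 0 := by rw [map_mul, hε, mul_zero]
                  rw [hDbar_apply, map_mul, hΔ, e1, e0, zero_smul, add_zero]
                  simp only [add_mul, sub_mul, smul_mul_assoc, mul_add,
                    Algebra.TensorProduct.tmul_mul_tmul, one_mul, mul_one]
                  abel
                rw [key]
                have m1 : a ⊗ₜ[k] ι x ∈ plauxSpanT (K ^ (n + 1)) :=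
                  plauxSpanT_tmul_mem ha (hmemKn n x)
                have m2 : ι x ⊗ₜ[k] a ∈ plauxSpanT (K ^ (n + 1)) :=
                  plauxSpanT_tmul_mem (hmemKn n x) ha
                have m3 : (1 : S) ⊗ₜ[k] ι x ∈ plauxSpanT (K ^ (n + 1)) :=
                  plauxSpanT_tmul_mem (honeK (n + 1)) (hmemKn n x)
                have m4 : ι x ⊗ₜ[k] (1 : S) ∈ plauxSpanT (K ^ (n + 1)) :=
                  plauxSpanT_tmul_mem (hmemKn n x) (honeK (n + 1))
                have m5 : Dbar a * (ι x ⊗ₜ[k] (1 : S)) ∈ plauxSpanT (K ^ (n + 1)) := by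
                  have := plauxSpanT_mul_tmul (IH a ha) (hmemK x) (Submodule.one_le.mp h1K)
                  rwa [← pow_succ] at this
                have m6 : Dbar a * ((1 : S) ⊗ₜ[k] ι x) ∈ plauxSpanT (K ^ (n + 1)) := by
                  have := plauxSpanT_mul_tmul (IH a ha) (Submodule.one_le.mp h1K) (hmemK x)
                  rwa [← pow_succ] at this
                exact add_mem (add_mem (sub_mem (sub_mem (add_mem m1 m2)
                  (Submodule.smul_mem _ _ m3)) (Submodule.smul_mem _ _ m4)) m5) m6
            | zero => rw [mul_zero, map_zero]; exact zero_mem _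
            | add u v hu hv hpu hpv => rw [mul_add, map_add]; exact add_mem hpu hpv
            | smul r u hu hpu =>
                rw [mul_smul_comm, map_smul]; exact Submodule.smul_mem _ _ hpu
          exact hmain z hz
  -- the counit-square identity via freeness
  have hε2 : ∀ C : S,
      TensorProduct.lid k k (TensorProduct.map ε.toLinearMap ε.toLinearMap (Δ C)) = ε C := by
    set E2 : S →ₐ[k] k :=
      ((Algebra.TensorProduct.lid k k : k ⊗[k] k ≃ₐ[k] k).toAlgHom.comp
        ((Algebra.TensorProduct.map ε ε).comp Δ)) with hE2def
    have key : ∀ T : S ⊗[k] S,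
        (Algebra.TensorProduct.lid k k) ((Algebra.TensorProduct.map ε ε) T)
          = TensorProduct.lid k k (TensorProduct.map ε.toLinearMap ε.toLinearMap T) := by
      intro T
      induction T using TensorProduct.induction_on with
      | zero => simp
      | tmul a b => simp
      | add u v hu hv => rw [map_add, map_add, map_add, map_add, hu, hv]
    have hE2x : ∀ x : L, E2 (ι x) = 0 := by
      intro x
      simp [hE2def, hΔ x, hε x]
    obtain ⟨g0, hg0, hg0u⟩ := hfree k (0 : L →ₗ[k] k)
    have h1 : E2 = g0 := hg0u E2 (fun x => by rw [hE2x]; simp)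
    have h2 : ε = g0 := hg0u ε (fun x => by rw [hε]; simp)
    intro C
    have hEC : E2 C = ε C := by rw [h1, h2]
    rw [← hEC, hE2def]
    simp only [AlgHom.coe_comp, Function.comp_apply, AlgEquiv.toAlgHom_eq_coe,
      AlgHom.coe_coe]
    exact key (Δ C)
  -- cS 1 = ε • 1
  have hf : ∀ C : S, cS 1 C = ε C • (1 : S) := by
    have main : ∀ n : ℕ, ∀ C ∈ (K ^ n : Submodule k S), cS 1 C = ε C • (1 : S) := by
      intro n
      induction n with
      | zero =>
          intro C hC
          rw [pow_zero] at hC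
          obtain ⟨r, rfl⟩ := Submodule.mem_one.mp hC
          rw [Algebra.algebraMap_eq_smul_one, map_smul, hone, map_smul, map_one, smul_assoc,
            one_smul]
      | succ n IH =>
          intro C hC
          have hDC : Dbar C ∈ plauxSpanT (K ^ n) := hstep n C hC
          have hΦ : ∀ T ∈ plauxSpanT (K ^ n),
              LinearMap.mul' k S (TensorProduct.map (cS 1) (cS 1) T)
                = (TensorProduct.lid k k
                    (TensorProduct.map ε.toLinearMap ε.toLinearMap T)) • (1 : S) := by
            intro T hT
            induction hT using Submodule.span_induction with
            | mem T' hT' =>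
                obtain ⟨u, hu, v, hv, rfl⟩ := hT'
                simp only [map_tmul, LinearMap.mul'_apply, lid_tmul, AlgHom.toLinearMap_apply]
                rw [IH u hu, IH v hv, smul_mul_smul_comm, mul_one, smul_eq_mul, mul_smul]
            | zero => simp
            | add u v hu hv hpu hpv => rw [map_add, map_add, map_add, map_add, hpu, hpv, add_smul]
            | smul r u hu hpu => rw [map_smul, map_smul, map_smul, map_smul, hpu, smul_assoc]
          have hsc : TensorProduct.lid k k
              (TensorProduct.map ε.toLinearMap ε.toLinearMap (Dbar C)) = 0 := by
            rw [hDbar_apply]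
            simp only [map_add, map_sub, map_smul, map_tmul, lid_tmul, hε2,
              AlgHom.toLinearMap_apply, map_one]
            simp [smul_eq_mul]
          have h := hmulM 1 1 C
          rw [one_mul] at h
          have hΔC : Δ C = (C ⊗ₜ[k] (1 : S) + (1 : S) ⊗ₜ[k] C
              - ε C • ((1 : S) ⊗ₜ[k] (1 : S))) + Dbar C := by
            rw [hDbar_apply]; abel
          have e : LinearMap.mul' k S (TensorProduct.map (cS 1) (cS 1) (Δ C))
              = cS 1 C + cS 1 C - ε C • (1 : S)
                + LinearMap.mul' k S (TensorProduct.map (cS 1) (cS 1) (Dbar C)) := by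
            conv_lhs => rw [hΔC]
            simp only [map_add, map_sub, map_smul, map_tmul, LinearMap.mul'_apply, hone,
              mul_one, one_mul]
          have h' : cS 1 C = cS 1 C + cS 1 C - ε C • (1 : S) + 0 := by
            conv_lhs => rw [h, e, hΦ _ hDC, hsc, zero_smul]
          rw [add_zero] at h'
          have h4 := eq_sub_iff_add_eq.mp h'
          exact (add_left_cancel h4).symm
    intro C
    obtain ⟨n, hn⟩ := hF1 C
    exact main n C hn
  -- the coderivation property
  have hcoder : ∀ (B : S) (x : L), Δ (cS B (ι x)) =
      TensorProduct.map (cS.flip (ι x)) LinearMap.id (Δ B)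
        + TensorProduct.map LinearMap.id (cS.flip (ι x)) (Δ B) := by
    intro B x
    have hDx : ∀ a b : S, cS.flip (ι x) (a * b)
        = cS.flip (ι x) a * b + a * cS.flip (ι x) b := by
      intro a b
      simp only [LinearMap.flip_apply]
      exact hder a b x
    induction hgen B using Algebra.adjoin_induction with
    | mem y hy =>
        obtain ⟨t, rfl⟩ := hy
        rw [hrestrict, hΔ, hΔ]
        simp [LinearMap.flip_apply, hrestrict, h1x x]
    | algebraMap r =>
        simp only [Algebra.algebraMap_eq_smul_one, map_smul, LinearMap.smul_apply, h1x x,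
          smul_zero, map_zero, map_one, Algebra.TensorProduct.one_def, map_tmul,
          LinearMap.id_coe, id_eq, LinearMap.flip_apply, h1x, zero_tmul, tmul_zero,
          add_zero, eq_self_iff_true]
    | add u v hu hv hpu hpv =>
        rw [map_add, LinearMap.add_apply, map_add, map_add, map_add, map_add, hpu, hpv]
        abel
    | mul u v hu hv hpu hpv =>
        have e : cS (u * v) (ι x) = cS.flip (ι x) (u * v) := rfl
        rw [e, hDx u v, map_add, map_mul, map_mul]
        simp only [LinearMap.flip_apply] at hpu hpv ⊢
        rw [hpu, hpv, map_mul,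
          plaux_map_deriv_left (cS.flip (ι x)) hDx (Δ u) (Δ v),
          plaux_map_deriv_right (cS.flip (ι x)) hDx (Δ u) (Δ v)]
        ring
  -- derivation property through the multiplication map
  have hderT : ∀ (T : S ⊗[k] S) (x : L),
      cS (LinearMap.mul' k S T) (ι x)
        = LinearMap.mul' k S (TensorProduct.map (cS.flip (ι x)) LinearMap.id T)
          + LinearMap.mul' k S (TensorProduct.map LinearMap.id (cS.flip (ι x)) T) := by
    intro T x
    induction T using TensorProduct.induction_on with
    | zero => simp
    | tmul a b =>
        simp only [LinearMap.mul'_apply, map_tmul, LinearMap.id_coe, id_eq,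
          LinearMap.flip_apply]
        exact hder a b x
    | add u v hu hv =>
        simp only [map_add, LinearMap.add_apply]
        rw [hu, hv]
        abel
  -- the main statement, by induction on A
  intro A
  induction hgen A using Algebra.adjoin_induction with
  | mem y hy =>
      obtain ⟨t, rfl⟩ := hy
      exact fun B x => hrec t x B
  | algebraMap r =>
      intro B x
      simp only [Algebra.algebraMap_eq_smul_one, map_smul, LinearMap.smul_apply]
      rw [hf (B * ι x), hf B, hf (cS B (ι x)), hεD B x, map_mul ε, hε x, mul_zero, map_smul,
        LinearMap.smul_apply, h1x x]
      simp
  | add U V hU hV hpU hpV =>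
      intro B x
      simp only [map_add, LinearMap.add_apply]
      rw [hpU B x, hpV B x]
      abel
  | mul U V hU hV hpU hpV =>
      intro B x
      have l1 : cS (U * V) (B * ι x)
          = LinearMap.mul' k S (TensorProduct.map (cS U) (cS V)
              (Δ B * (ι x ⊗ₜ[k] (1 : S) + (1 : S) ⊗ₜ[k] ι x))) := by
        rw [hmulM, map_mul, hΔ]
      have l3 : cS (U * V) (cS B (ι x))
          = LinearMap.mul' k S (TensorProduct.map (cS U) (cS V)
              (TensorProduct.map (cS.flip (ι x)) LinearMap.id (Δ B)
                + TensorProduct.map LinearMap.id (cS.flip (ι x)) (Δ B))) := by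
        rw [hmulM, hcoder B x]
      rw [l1, l3, hmulM U V B, hderT]
      generalize Δ B = T
      induction T using TensorProduct.induction_on with
      | zero => simp
      | tmul a b =>
          simp only [mul_add, Algebra.TensorProduct.tmul_mul_tmul, mul_one, one_mul,
            map_add, map_tmul, LinearMap.mul'_apply, LinearMap.id_coe, id_eq,
            LinearMap.flip_apply]
          rw [hpU a x, hpV b x]
          ring
      | add u v hu hv =>
          simp only [add_mul, map_add, LinearMap.mul'_apply] at hu hv ⊢
          rw [hu, hv]
          ring
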